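/- Let N ≥ 1 and let μ denote the Haar probability measure on the unitary group U(N). For all indices a₁, a₂, b₁, b₂ ∈ Fin N, the first moment of the circular orthogonal ensemble (realized as v vᵀ with v Haar on U(N)) is ∫_{U(N)} (v vᵀ)_{a₁ a₂} · conj((v vᵀ)_{b₁ b₂}) dμ(v) = (1/(N+1)) · (δ_{a₁ b₁} δ_{a₂ b₂} + δ_{a₁ b₂} δ_{a₂ b₁}). The first summand corresponds to the ladder (time-parallel) contraction and the second to the twisted (time-reversed) contraction. -/

import Mathlib

open Matrix MeasureTheory
open scoped ComplexConjugate
set_option linter.unusedSectionVars false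
set_option linter.unusedTactic false

noncomputable instance matrixMeasurableSpace (m n : Type*) :
    MeasurableSpace (Matrix m n ℂ) := by
  unfold Matrix; infer_instance

namespace COEProof

instance matrixBorelSpace (m n : Type*) [Countable m] [Countable n] :
    BorelSpace (Matrix m n ℂ) := by
  unfold Matrix matrixMeasurableSpace
  exact Pi.borelSpace

variable {N : ℕ}

instance : BorelSpace (unitaryGroup (Fin N) ℂ) := Subtype.borelSpace _

instance : ContinuousMul (unitaryGroup (Fin N) ℂ) :=
  ⟨continuous_induced_rng.2 <|
    (continuous_subtype_val.comp continuous_fst).mul (continuous_subtype_val.comp continuous_snd)⟩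

instance : ContinuousInv (unitaryGroup (Fin N) ℂ) :=
  ⟨continuous_induced_rng.2 <| continuous_star.comp continuous_subtype_val⟩

instance : IsTopologicalGroup (unitaryGroup (Fin N) ℂ) := ⟨⟩

instance : CompactSpace (unitaryGroup (Fin N) ℂ) := by
  have hclosed : IsClosed ((unitaryGroup (Fin N) ℂ : Set (Matrix (Fin N) (Fin N) ℂ))) := by
    have : (unitaryGroup (Fin N) ℂ : Set (Matrix (Fin N) (Fin N) ℂ)) =
        {A | star A * A = 1} ∩ {A | A * star A = 1} := by
      ext A
      simp [Unitary.mem_iff]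
    rw [this]
    exact ((isClosed_singleton.preimage (continuous_star.mul continuous_id)).inter
      (isClosed_singleton.preimage (continuous_id.mul continuous_star)))
  have hsub : (unitaryGroup (Fin N) ℂ : Set (Matrix (Fin N) (Fin N) ℂ)) ⊆
      Set.pi Set.univ fun _ : Fin N => Set.pi Set.univ fun _ : Fin N =>
        Metric.closedBall (0 : ℂ) 1 := by
    intro A hA i _ j _
    simpa [Complex.dist_eq] using entry_norm_bound_of_unitary hA i j
  have hK : IsCompact (Set.pi Set.univ fun _ : Fin N => Set.pi Set.univ fun _ : Fin N =>
      Metric.closedBall (0 : ℂ) 1) :=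
    isCompact_univ_pi fun _ => isCompact_univ_pi fun _ => isCompact_closedBall _ _
  exact isCompact_iff_compactSpace.mp (hK.of_isClosed_subset hclosed hsub)

instance rightInvariant (μ : Measure (unitaryGroup (Fin N) ℂ)) [μ.IsHaarMeasure]
    [IsProbabilityMeasure μ] : μ.IsMulRightInvariant := by
  constructor
  intro g
  have h2 : IsProbabilityMeasure (Measure.map (· * g) μ) :=
    Measure.isProbabilityMeasure_map (measurable_mul_const g).aemeasurable
  exact Measure.isHaarMeasure_eq_of_isProbabilityMeasure _ μ

/-- matrix entry of a unitary -/
def ent (v : unitaryGroup (Fin N) ℂ) (i j : Fin N) : ℂ :=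
  (v : Matrix (Fin N) (Fin N) ℂ) i j

lemma continuous_ent (i j : Fin N) : Continuous fun v : unitaryGroup (Fin N) ℂ => ent v i j :=
  continuous_subtype_val.matrix_elem i j

section Moments

variable (μ : Measure (unitaryGroup (Fin N) ℂ)) [μ.IsHaarMeasure] [IsProbabilityMeasure μ]

/-- the basic degree-(2,2) mixed moment -/
noncomputable def mom (a a' b b' j j' k k' : Fin N) : ℂ :=
  ∫ v : unitaryGroup (Fin N) ℂ,
    ent v a j * ent v a' j' * (conj (ent v b k) * conj (ent v b' k')) ∂μ

lemma integrable_cont {f : unitaryGroup (Fin N) ℂ → ℂ} (hf : Continuous f) :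
    Integrable f μ :=
  hf.integrable_of_hasCompactSupport (isClosed_tsupport f).isCompact

lemma cont_term (a a' b b' j j' k k' : Fin N) :
    Continuous fun v : unitaryGroup (Fin N) ℂ =>
      ent v a j * ent v a' j' * (conj (ent v b k) * conj (ent v b' k')) :=
  ((continuous_ent a j).mul (continuous_ent a' j')).mul
    (((Complex.continuous_conj).comp (continuous_ent b k)).mul
      ((Complex.continuous_conj).comp (continuous_ent b' k')))

lemma integrable_term (a a' b b' j j' k k' : Fin N) :
    Integrable (fun v : unitaryGroup (Fin N) ℂ =>
      ent v a j * ent v a' j' * (conj (ent v b k) * conj (ent v b' k'))) μ :=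
  integrable_cont μ (cont_term a a' b b' j j' k k')


lemma mom_phase_left (c : Fin N → ℂ) (hc : ∀ x, conj (c x) * c x = 1)
    (a a' b b' j j' k k' : Fin N) :
    mom μ a a' b b' j j' k k' =
      (c a * c a' * (conj (c b) * conj (c b'))) * mom μ a a' b b' j j' k k' := by
  have hmem : diagonal c ∈ unitaryGroup (Fin N) ℂ := by
    have hfun : (fun i => star c i * c i) = (fun _ => (1 : ℂ)) := funext fun x => hc x
    rw [mem_unitaryGroup_iff', star_eq_conjTranspose, diagonal_conjTranspose,
      diagonal_mul_diagonal, hfun]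
    exact diagonal_one
  set d : unitaryGroup (Fin N) ℂ := ⟨diagonal c, hmem⟩ with hd
  have hent : ∀ (v : unitaryGroup (Fin N) ℂ) (x y : Fin N),
      ent (d * v) x y = c x * ent v x y := by
    intro v x y
    show ((d * v : unitaryGroup (Fin N) ℂ) : Matrix (Fin N) (Fin N) ℂ) x y = _
    rw [UnitaryGroup.mul_val]
    show (diagonal c * (v : Matrix (Fin N) (Fin N) ℂ)) x y = _
    rw [diagonal_mul]
    rfl
  have h := integral_mul_left_eq_self (μ := μ)
    (fun v => ent v a j * ent v a' j' * (conj (ent v b k) * conj (ent v b' k'))) d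
  calc mom μ a a' b b' j j' k k'
      = ∫ v, ent (d * v) a j * ent (d * v) a' j' *
          (conj (ent (d * v) b k) * conj (ent (d * v) b' k')) ∂μ := by
        simp only [mom]; exact h.symm
    _ = ∫ v, (c a * c a' * (conj (c b) * conj (c b'))) *
          (ent v a j * ent v a' j' * (conj (ent v b k) * conj (ent v b' k'))) ∂μ := by
        congr 1; funext v
        simp only [hent, _root_.map_mul]
        ring
    _ = _ := by rw [integral_const_mul]; rfl

lemma mom_phase_right (c : Fin N → ℂ) (hc : ∀ x, conj (c x) * c x = 1)
    (a a' b b' j j' k k' : Fin N) :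
    mom μ a a' b b' j j' k k' =
      (c j * c j' * (conj (c k) * conj (c k'))) * mom μ a a' b b' j j' k k' := by
  have hmem : diagonal c ∈ unitaryGroup (Fin N) ℂ := by
    have hfun : (fun i => star c i * c i) = (fun _ => (1 : ℂ)) := funext fun x => hc x
    rw [mem_unitaryGroup_iff', star_eq_conjTranspose, diagonal_conjTranspose,
      diagonal_mul_diagonal, hfun]
    exact diagonal_one
  set d : unitaryGroup (Fin N) ℂ := ⟨diagonal c, hmem⟩ with hd
  have hent : ∀ (v : unitaryGroup (Fin N) ℂ) (x y : Fin N),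
      ent (v * d) x y = ent v x y * c y := by
    intro v x y
    show ((v * d : unitaryGroup (Fin N) ℂ) : Matrix (Fin N) (Fin N) ℂ) x y = _
    rw [UnitaryGroup.mul_val]
    show ((v : Matrix (Fin N) (Fin N) ℂ) * diagonal c) x y = _
    rw [mul_diagonal]
    rfl
  have h := integral_mul_right_eq_self (μ := μ)
    (fun v => ent v a j * ent v a' j' * (conj (ent v b k) * conj (ent v b' k'))) d
  calc mom μ a a' b b' j j' k k'
      = ∫ v, ent (v * d) a j * ent (v * d) a' j' *
          (conj (ent (v * d) b k) * conj (ent (v * d) b' k')) ∂μ := by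
        simp only [mom]; exact h.symm
    _ = ∫ v, (c j * c j' * (conj (c k) * conj (c k'))) *
          (ent v a j * ent v a' j' * (conj (ent v b k) * conj (ent v b' k'))) ∂μ := by
        congr 1; funext v
        simp only [hent, _root_.map_mul]
        ring
    _ = _ := by rw [integral_const_mul]; rfl

lemma mom_col_ne {j k : Fin N} (hjk : j ≠ k) (a a' b b' : Fin N) :
    mom μ a a' b b' j j k k = 0 := by
  have hc : ∀ x, conj ((fun x => if x = j then Complex.I else 1) x) *
      (fun x => if x = j then Complex.I else 1) x = 1 := by
    intro x
    by_cases hx : x = j <;> simp [hx]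
  have hp := mom_phase_right μ (fun x => if x = j then Complex.I else 1) hc a a' b b' j j k k
  rw [if_pos rfl, if_neg (Ne.symm hjk), _root_.map_one, Complex.I_mul_I] at hp
  linear_combination hp / 2

lemma mom_zero_row (a a' b b' j j' k k' r : Fin N)
    (h : ((if a = r then Complex.I else 1) * (if a' = r then Complex.I else 1) *
      ((if b = r then -Complex.I else 1) * (if b' = r then -Complex.I else 1))) ≠ 1) :
    mom μ a a' b b' j j' k k' = 0 := by
  have hc : ∀ x, conj ((fun x => if x = r then Complex.I else 1) x) *
      (fun x => if x = r then Complex.I else 1) x = 1 := by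
    intro x
    by_cases hx : x = r <;> simp [hx]
  have hp := mom_phase_left μ (fun x => if x = r then Complex.I else 1) hc a a' b b' j j' k k'
  simp only [apply_ite conj, _root_.map_one, Complex.conj_I] at hp
  by_contra hm
  apply h
  have h2 : (((if a = r then Complex.I else 1) * (if a' = r then Complex.I else 1) *
      ((if b = r then -Complex.I else 1) * (if b' = r then -Complex.I else 1))) - 1) *
      mom μ a a' b b' j j' k k' = 0 := by linear_combination -hp
  rcases mul_eq_zero.mp h2 with h3 | h3
  · exact sub_eq_zero.mp h3
  · exact absurd h3 hm


end Moments

/-- permutation matrix -/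
def permMat (σ : Equiv.Perm (Fin N)) : Matrix (Fin N) (Fin N) ℂ :=
  fun i k => if i = σ k then 1 else 0

lemma permMat_mem (σ : Equiv.Perm (Fin N)) : permMat σ ∈ unitaryGroup (Fin N) ℂ := by
  rw [mem_unitaryGroup_iff', star_eq_conjTranspose]
  ext i k
  rw [Matrix.mul_apply, Matrix.one_apply]
  have hterm : ∀ x : Fin N, (permMat σ)ᴴ i x * permMat σ x k =
      if x = σ i then (if x = σ k then (1 : ℂ) else 0) else 0 := by
    intro x
    simp only [conjTranspose_apply, permMat]
    by_cases h1 : x = σ i <;> by_cases h2 : x = σ k <;> simp [h1, h2]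
  rw [Finset.sum_congr rfl fun x _ => hterm x, Finset.sum_ite_eq' Finset.univ (σ i)]
  simp [EmbeddingLike.apply_eq_iff_eq]

lemma permMat_ent (σ : Equiv.Perm (Fin N)) (v : unitaryGroup (Fin N) ℂ) (x y : Fin N) :
    ent (⟨permMat σ, permMat_mem σ⟩ * v) x y = ent v (σ⁻¹ x) y := by
  show ((⟨permMat σ, permMat_mem σ⟩ * v : unitaryGroup (Fin N) ℂ) :
    Matrix (Fin N) (Fin N) ℂ) x y = _
  rw [UnitaryGroup.mul_val]
  show (permMat σ * (v : Matrix (Fin N) (Fin N) ℂ)) x y = _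
  rw [Matrix.mul_apply]
  have hterm : ∀ k : Fin N, permMat σ x k * (v : Matrix (Fin N) (Fin N) ℂ) k y =
      if k = σ⁻¹ x then (v : Matrix (Fin N) (Fin N) ℂ) k y else 0 := by
    intro k
    simp only [permMat]
    rcases eq_or_ne k (σ⁻¹ x) with h | h
    · subst h
      simp
    · have hx : x ≠ σ k := by
        intro hcon
        exact h (by simp [hcon])
      simp [hx, h]
      intro hk; exact absurd hk h
  rw [Finset.sum_congr rfl fun k _ => hterm k, Finset.sum_ite_eq' Finset.univ (σ⁻¹ x)]
  simp [ent]

section Moments2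

variable (μ : Measure (unitaryGroup (Fin N) ℂ)) [μ.IsHaarMeasure] [IsProbabilityMeasure μ]

lemma mom_perm_left (σ : Equiv.Perm (Fin N)) (a a' b b' j j' k k' : Fin N) :
    mom μ (σ a) (σ a') (σ b) (σ b') j j' k k' = mom μ a a' b b' j j' k k' := by
  set P : unitaryGroup (Fin N) ℂ := ⟨permMat σ⁻¹, permMat_mem σ⁻¹⟩ with hP
  have hent : ∀ (v : unitaryGroup (Fin N) ℂ) (x y : Fin N),
      ent (P * v) x y = ent v (σ x) y := by
    intro v x y
    rw [hP, permMat_ent σ⁻¹ v x y, inv_inv]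
  have h := integral_mul_left_eq_self (μ := μ)
    (fun v => ent v a j * ent v a' j' * (conj (ent v b k) * conj (ent v b' k'))) P
  calc mom μ (σ a) (σ a') (σ b) (σ b') j j' k k'
      = ∫ v, ent (P * v) a j * ent (P * v) a' j' *
          (conj (ent (P * v) b k) * conj (ent (P * v) b' k')) ∂μ := by
        simp only [mom, hent]
    _ = mom μ a a' b b' j j' k k' := by simp only [mom]; exact h

end Moments2

lemma exists_perm_pair {α : Type*} [DecidableEq α] {a b c d : α} (hab : a ≠ b) (hcd : c ≠ d) :
    ∃ σ : Equiv.Perm α, σ a = c ∧ σ b = d := by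
  set τ := Equiv.swap a c with hτ
  have h2 : τ b ≠ c := by
    intro hcon
    apply hab
    have := congrArg τ hcon
    rw [Equiv.swap_apply_self, Equiv.swap_apply_right] at this
    exact this.symm
  refine ⟨τ.trans (Equiv.swap (τ b) d), ?_, ?_⟩
  · have h1 : τ a = c := Equiv.swap_apply_left a c
    rw [Equiv.trans_apply, h1, Equiv.swap_apply_of_ne_of_ne (Ne.symm h2) hcd]
  · rw [Equiv.trans_apply, Equiv.swap_apply_left]

section Moments3

variable (μ : Measure (unitaryGroup (Fin N) ℂ)) [μ.IsHaarMeasure] [IsProbabilityMeasure μ]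

lemma mom_rows_zero (a a' b b' j j' k k' : Fin N)
    (h1 : ¬(a = b ∧ a' = b')) (h2 : ¬(a = b' ∧ a' = b)) :
    mom μ a a' b b' j j' k k' = 0 := by
  by_cases hab : a = b
  · subst hab
    have h1' : a' ≠ b' := fun hcon => h1 ⟨rfl, hcon⟩
    by_cases haa' : a' = a
    · have hb' : b' ≠ a := fun hcon => h1' (haa'.trans hcon.symm)
      exact mom_zero_row μ _ _ _ _ _ _ _ _ a (by simp [haa', hb', Complex.ext_iff])
    · exact mom_zero_row μ _ _ _ _ _ _ _ _ a' (by simp [Ne.symm haa', Ne.symm h1', Complex.ext_iff])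
  · by_cases hab' : a = b'
    · subst hab'
      have ha'b : a' ≠ b := fun hcon => h2 ⟨rfl, hcon⟩
      by_cases haa' : a' = a
      · exact mom_zero_row μ _ _ _ _ _ _ _ _ a (by simp [haa', Ne.symm hab, Complex.ext_iff])
      · exact mom_zero_row μ _ _ _ _ _ _ _ _ a' (by simp [Ne.symm haa', Ne.symm ha'b, Complex.ext_iff])
    · by_cases haa' : a' = a
      · refine mom_zero_row μ _ _ _ _ _ _ _ _ a ?_
        simp [haa', Ne.symm hab, Ne.symm hab']
        norm_num
      · exact mom_zero_row μ _ _ _ _ _ _ _ _ a (by simp [haa', Ne.symm hab, Ne.symm hab', Complex.ext_iff])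

end Moments3

noncomputable def rc : ℂ := ((Real.sqrt 2)⁻¹ : ℝ)

lemma conj_rc : conj rc = rc := Complex.conj_ofReal _

lemma rc_sq : rc * rc = 1 / 2 := by
  have h : Real.sqrt 2 * Real.sqrt 2 = 2 := Real.mul_self_sqrt (by norm_num)
  have h2 : ((Real.sqrt 2)⁻¹ * (Real.sqrt 2)⁻¹ : ℝ) = 1 / 2 := by
    rw [← mul_inv, h]; norm_num
  simp only [rc, ← Complex.ofReal_mul, h2]
  norm_num

noncomputable def rotMat (a b : Fin N) : Matrix (Fin N) (Fin N) ℂ :=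
  fun i k =>
    if i = a then (if k = a then rc else if k = b then rc else 0)
    else if i = b then (if k = a then -rc else if k = b then rc else 0)
    else if i = k then 1 else 0

lemma rotMat_mem {a b : Fin N} (hab : a ≠ b) : rotMat a b ∈ unitaryGroup (Fin N) ℂ := by
  rw [mem_unitaryGroup_iff', star_eq_conjTranspose]
  ext i k
  rw [Matrix.mul_apply, Matrix.one_apply,
    ← Finset.sum_sdiff (Finset.subset_univ ({a, b} : Finset (Fin N))), Finset.sum_pair hab]
  have hsd : ∀ x ∈ Finset.univ \ ({a, b} : Finset (Fin N)),
      (rotMat a b)ᴴ i x * rotMat a b x k =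
        if x = i then (if i = k then (1 : ℂ) else 0) else 0 := by
    intro x hx
    simp only [Finset.mem_sdiff, Finset.mem_univ, Finset.mem_insert, Finset.mem_singleton,
      true_and] at hx
    push_neg at hx
    simp only [conjTranspose_apply, rotMat, if_neg hx.1, if_neg hx.2]
    by_cases h1 : x = i <;> by_cases h2 : x = k <;> simp_all
  rw [Finset.sum_congr rfl hsd, Finset.sum_ite_eq' (Finset.univ \ ({a, b} : Finset (Fin N))) i]
  simp only [conjTranspose_apply, Finset.mem_sdiff, Finset.mem_univ, Finset.mem_insert,
    Finset.mem_singleton, true_and]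
  rcases eq_or_ne i a with hia | hia <;> rcases eq_or_ne i b with hib | hib <;>
    rcases eq_or_ne k a with hka | hka <;> rcases eq_or_ne k b with hkb | hkb <;>
      simp_all [rotMat, conj_rc, Ne.symm hab] <;>
      first
        | linear_combination 2 * rc_sq
        | (simp [Ne.symm hka, Ne.symm hkb]; linear_combination 2 * rc_sq)
        | simp [Ne.symm hka, Ne.symm hkb]

lemma rotMat_row {a b : Fin N} (hab : a ≠ b) (v : unitaryGroup (Fin N) ℂ) (y : Fin N) :
    ent (⟨rotMat a b, rotMat_mem hab⟩ * v) a y = rc * (ent v a y + ent v b y) := by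
  show ((⟨rotMat a b, rotMat_mem hab⟩ * v : unitaryGroup (Fin N) ℂ) :
    Matrix (Fin N) (Fin N) ℂ) a y = _
  rw [UnitaryGroup.mul_val]
  show (rotMat a b * (v : Matrix (Fin N) (Fin N) ℂ)) a y = _
  rw [Matrix.mul_apply, ← Finset.sum_sdiff (Finset.subset_univ ({a, b} : Finset (Fin N))),
    Finset.sum_pair hab]
  have hsd : ∀ x ∈ Finset.univ \ ({a, b} : Finset (Fin N)),
      rotMat a b a x * (v : Matrix (Fin N) (Fin N) ℂ) x y = 0 := by
    intro x hx
    simp only [Finset.mem_sdiff, Finset.mem_univ, Finset.mem_insert, Finset.mem_singleton,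
      true_and] at hx
    push_neg at hx
    simp [rotMat, hx.1, hx.2]
  rw [Finset.sum_eq_zero hsd]
  simp only [ent]
  simp [rotMat, Ne.symm hab]
  try ring

section Moments4

variable (μ : Measure (unitaryGroup (Fin N) ℂ)) [μ.IsHaarMeasure] [IsProbabilityMeasure μ]

lemma mom_comm₁ (a b j : Fin N) : mom μ a b b a j j j j = mom μ a b a b j j j j := by
  simp only [mom]; congr 1; funext v; ring

lemma mom_comm₂ (a b j : Fin N) : mom μ b a a b j j j j = mom μ a b a b j j j j := by
  simp only [mom]; congr 1; funext v; ring

lemma mom_comm₃ (a b j : Fin N) : mom μ b a b a j j j j = mom μ a b a b j j j j := by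
  simp only [mom]; congr 1; funext v; ring

lemma mom_swap (a b j : Fin N) : mom μ b b b b j j j j = mom μ a a a a j j j j := by
  have := mom_perm_left μ (Equiv.swap a b) a a a a j j j j
  simpa [Equiv.swap_apply_left] using this

lemma mom_rot {a b : Fin N} (hab : a ≠ b) (j : Fin N) :
    mom μ a a a a j j j j = 2 * mom μ a b a b j j j j := by
  set R : unitaryGroup (Fin N) ℂ := ⟨rotMat a b, rotMat_mem hab⟩ with hR
  have hent : ∀ v : unitaryGroup (Fin N) ℂ, ent (R * v) a j = rc * (ent v a j + ent v b j) :=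
    fun v => rotMat_row hab v j
  have h := integral_mul_left_eq_self (μ := μ)
    (fun v => ent v a j * ent v a j * (conj (ent v a j) * conj (ent v a j))) R
  set Q4 : Finset ((Fin N × Fin N) × (Fin N × Fin N)) :=
    (({a, b} : Finset (Fin N)) ×ˢ ({a, b} : Finset (Fin N))) ×ˢ
      (({a, b} : Finset (Fin N)) ×ˢ ({a, b} : Finset (Fin N))) with hQ4
  have key : mom μ a a a a j j j j =
      ∑ z ∈ Q4, (1/4 : ℂ) * mom μ z.1.1 z.1.2 z.2.1 z.2.2 j j j j := by
    calc mom μ a a a a j j j j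
        = ∫ v, ent (R * v) a j * ent (R * v) a j *
            (conj (ent (R * v) a j) * conj (ent (R * v) a j)) ∂μ := by
          simp only [mom]; exact h.symm
      _ = ∫ v, ∑ z ∈ Q4, (1/4 : ℂ) *
            (ent v z.1.1 j * ent v z.1.2 j *
              (conj (ent v z.2.1 j) * conj (ent v z.2.2 j))) ∂μ := by
          congr 1; funext v
          rw [hent v, _root_.map_mul, _root_.map_add, conj_rc]
          simp only [hQ4, Finset.sum_product, Finset.sum_pair hab]
          linear_combination ((rc * rc + 1/2) *
            ((ent v a j + ent v b j) * (ent v a j + ent v b j) *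
              ((conj (ent v a j) + conj (ent v b j)) *
                (conj (ent v a j) + conj (ent v b j))))) * rc_sq
      _ = ∑ z ∈ Q4, (1/4 : ℂ) * mom μ z.1.1 z.1.2 z.2.1 z.2.2 j j j j := by
          rw [integral_finset_sum _
            (fun z _ => (integrable_term μ z.1.1 z.1.2 z.2.1 z.2.2 j j j j).const_mul _)]
          exact Finset.sum_congr rfl fun z _ => by rw [integral_const_mul]; rfl
  simp only [hQ4, Finset.sum_product, Finset.sum_pair hab] at key
  have z1 : mom μ a a a b j j j j = 0 :=
    mom_zero_row μ _ _ _ _ _ _ _ _ b (by simp [hab, Complex.ext_iff])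
  have z2 : mom μ a a b a j j j j = 0 :=
    mom_zero_row μ _ _ _ _ _ _ _ _ b (by simp [hab, Complex.ext_iff])
  have z3 : mom μ a a b b j j j j = 0 :=
    mom_zero_row μ _ _ _ _ _ _ _ _ a (by simp [Ne.symm hab]; norm_num)
  have z4 : mom μ a b a a j j j j = 0 :=
    mom_zero_row μ _ _ _ _ _ _ _ _ b (by simp [hab, Complex.ext_iff])
  have z5 : mom μ b a a a j j j j = 0 :=
    mom_zero_row μ _ _ _ _ _ _ _ _ b (by simp [hab, Complex.ext_iff])
  have z6 : mom μ a b b b j j j j = 0 :=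
    mom_zero_row μ _ _ _ _ _ _ _ _ a (by simp [Ne.symm hab, Complex.ext_iff])
  have z7 : mom μ b a b b j j j j = 0 :=
    mom_zero_row μ _ _ _ _ _ _ _ _ a (by simp [Ne.symm hab, Complex.ext_iff])
  have z8 : mom μ b b a a j j j j = 0 :=
    mom_zero_row μ _ _ _ _ _ _ _ _ a (by simp [Ne.symm hab]; norm_num)
  have z9 : mom μ b b a b j j j j = 0 :=
    mom_zero_row μ _ _ _ _ _ _ _ _ a (by simp [Ne.symm hab, Complex.ext_iff])
  have z10 : mom μ b b b a j j j j = 0 :=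
    mom_zero_row μ _ _ _ _ _ _ _ _ a (by simp [Ne.symm hab, Complex.ext_iff])
  rw [z1, z2, z3, z4, z5, z6, z7, z8, z9, z10, mom_comm₁ μ a b j, mom_comm₂ μ a b j,
    mom_comm₃ μ a b j, mom_swap μ a b j] at key
  linear_combination 2 * key

lemma mom_sum_one (j : Fin N) : ∑ p : Fin N, ∑ q : Fin N, mom μ p q p q j j j j = 1 := by
  have h1 : ∀ p : Fin N, ∑ q : Fin N, mom μ p q p q j j j j =
      ∫ v, ∑ q : Fin N, ent v p j * ent v q j * (conj (ent v p j) * conj (ent v q j)) ∂μ :=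
    fun p => (integral_finset_sum _ (fun q _ => integrable_term μ p q p q j j j j)).symm
  rw [Finset.sum_congr rfl fun p _ => h1 p,
    ← integral_finset_sum _
      (fun p _ => integrable_finset_sum _ fun q _ => integrable_term μ p q p q j j j j)]
  have hpoint : ∀ v : unitaryGroup (Fin N) ℂ,
      (∑ p : Fin N, ∑ q : Fin N,
        ent v p j * ent v q j * (conj (ent v p j) * conj (ent v q j))) = 1 := by
    intro v
    have hcol : ∑ p : Fin N, ent v p j * conj (ent v p j) = 1 := by
      have hu : star (v : Matrix (Fin N) (Fin N) ℂ) * (v : Matrix (Fin N) (Fin N) ℂ) = 1 :=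
        v.2.1
      have h2 : (star (v : Matrix (Fin N) (Fin N) ℂ) * (v : Matrix (Fin N) (Fin N) ℂ)) j j
          = (1 : Matrix (Fin N) (Fin N) ℂ) j j := by rw [hu]
      rw [Matrix.mul_apply, Matrix.one_apply_eq, star_eq_conjTranspose] at h2
      simp only [conjTranspose_apply] at h2
      rw [← h2]
      exact Finset.sum_congr rfl fun p _ => by
        simp only [ent, Complex.star_def]; ring
    calc (∑ p : Fin N, ∑ q : Fin N,
          ent v p j * ent v q j * (conj (ent v p j) * conj (ent v q j)))
        = (∑ p : Fin N, ent v p j * conj (ent v p j)) *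
            (∑ q : Fin N, ent v q j * conj (ent v q j)) := by
          rw [Finset.sum_mul_sum]
          exact Finset.sum_congr rfl fun p _ => Finset.sum_congr rfl fun q _ => by ring
      _ = 1 := by rw [hcol]; ring
  rw [show (fun v : unitaryGroup (Fin N) ℂ => ∑ p : Fin N, ∑ q : Fin N,
      ent v p j * ent v q j * (conj (ent v p j) * conj (ent v q j))) = fun _ => (1 : ℂ)
    from funext hpoint]
  simp

/-- row-pair second moment sums -/
noncomputable def S (a b : Fin N) : ℂ := ∑ j : Fin N, mom μ a b a b j j j j

lemma S_perm (σ : Equiv.Perm (Fin N)) (a b : Fin N) : S μ (σ a) (σ b) = S μ a b :=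
  Finset.sum_congr rfl fun j _ => mom_perm_left μ σ a b a b j j j j

lemma S_sum : ∑ a : Fin N, ∑ b : Fin N, S μ a b = (N : ℂ) := by
  calc ∑ a : Fin N, ∑ b : Fin N, S μ a b
      = ∑ a : Fin N, ∑ j : Fin N, ∑ b : Fin N, mom μ a b a b j j j j :=
        Finset.sum_congr rfl fun a _ => Finset.sum_comm
    _ = ∑ j : Fin N, ∑ a : Fin N, ∑ b : Fin N, mom μ a b a b j j j j := Finset.sum_comm
    _ = ∑ _j : Fin N, (1 : ℂ) := Finset.sum_congr rfl fun j _ => mom_sum_one μ j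
    _ = (N : ℂ) := by simp

lemma S_two (a b : Fin N) (hab : a ≠ b) : S μ a a = 2 * S μ a b := by
  calc S μ a a = ∑ j : Fin N, mom μ a a a a j j j j := rfl
    _ = ∑ j : Fin N, 2 * mom μ a b a b j j j j :=
        Finset.sum_congr rfl fun j _ => mom_rot μ hab j
    _ = 2 * S μ a b := by rw [← Finset.mul_sum]; rfl

lemma S_offdiag {a b : Fin N} (hab : a ≠ b) : S μ a b = 1 / ((N : ℂ) + 1) := by
  have hNpos : 0 < N := a.pos
  have hN0 : (N : ℂ) ≠ 0 := Nat.cast_ne_zero.mpr hNpos.ne'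
  have hN1 : (N : ℂ) + 1 ≠ 0 := by
    have : ((N + 1 : ℕ) : ℂ) ≠ 0 := Nat.cast_ne_zero.mpr (Nat.succ_ne_zero N)
    push_cast at this
    exact this
  have hQall : ∀ c d : Fin N, c ≠ d → S μ c d = S μ a b := by
    intro c d hcd
    obtain ⟨σ, h1, h2⟩ := exists_perm_pair hcd hab
    rw [← h1, ← h2, S_perm]
  have hrow : ∀ c : Fin N, ∑ d : Fin N, S μ c d = 2 * S μ a b + ((N : ℂ) - 1) * S μ a b := by
    intro c
    have hd : ∃ d : Fin N, c ≠ d := by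
      by_cases hca : c = a
      · exact ⟨b, fun h => hab (hca ▸ h)⟩
      · exact ⟨a, hca⟩
    obtain ⟨d, hcd⟩ := hd
    rw [← Finset.add_sum_erase _ _ (Finset.mem_univ c), S_two μ c d hcd, hQall c d hcd]
    congr 1
    rw [Finset.sum_congr rfl (fun e he => hQall c e (Ne.symm (Finset.ne_of_mem_erase he))),
      Finset.sum_const, Finset.card_erase_of_mem (Finset.mem_univ c), Finset.card_univ,
      Fintype.card_fin, nsmul_eq_mul, Nat.cast_sub hNpos]
    norm_num
  have htot := S_sum μ
  rw [Finset.sum_congr rfl (fun c _ => hrow c), Finset.sum_const, Finset.card_univ,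
    Fintype.card_fin, nsmul_eq_mul] at htot
  have hkey : S μ a b * ((N : ℂ) + 1) = 1 :=
    mul_left_cancel₀ hN0 (by linear_combination htot)
  rw [eq_div_iff hN1]
  exact hkey

lemma S_diag (hN : 1 ≤ N) (a : Fin N) : S μ a a = 2 / ((N : ℂ) + 1) := by
  by_cases hex : ∃ b : Fin N, b ≠ a
  · obtain ⟨b, hb⟩ := hex
    rw [S_two μ a b (Ne.symm hb), S_offdiag μ (Ne.symm hb)]
    ring
  · push_neg at hex
    have hN1 : N = 1 := le_antisymm (by
      have := Fintype.card_le_one_iff.mpr (fun x y => (hex x).trans (hex y).symm)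
      simpa using this) hN
    subst hN1
    have htot := S_sum μ
    have ha : a = 0 := Subsingleton.elim a 0
    rw [Fin.sum_univ_one, Fin.sum_univ_one] at htot
    rw [ha, htot]
    norm_num

end Moments4

end COEProof



open COEProof

/-- First moment of the COE (realized as `v vᵀ` with `v` Haar on
`U(N)`): `∫ (v vᵀ)_{a₁a₂} conj((v vᵀ)_{b₁b₂}) dμ(v)
  = (δ_{a₁b₁} δ_{a₂b₂} + δ_{a₁b₂} δ_{a₂b₁})/(N+1)`,
the two summands being the ladder (time-parallel) and twisted (time-reversed)
contractions. -/
theorem coe_first_moment (N : ℕ) (hN : 1 ≤ N)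
    (μ : Measure (unitaryGroup (Fin N) ℂ)) [μ.IsHaarMeasure] [IsProbabilityMeasure μ]
    (a₁ a₂ b₁ b₂ : Fin N) :
    (∫ v : unitaryGroup (Fin N) ℂ,
        ((v : Matrix (Fin N) (Fin N) ℂ) * (v : Matrix (Fin N) (Fin N) ℂ)ᵀ) a₁ a₂ *
          (starRingEnd ℂ)
            (((v : Matrix (Fin N) (Fin N) ℂ) * (v : Matrix (Fin N) (Fin N) ℂ)ᵀ) b₁ b₂) ∂μ)
      = (1 / ((N : ℂ) + 1)) *
          ((if a₁ = b₁ then 1 else 0) * (if a₂ = b₂ then 1 else 0)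
            + (if a₁ = b₂ then 1 else 0) * (if a₂ = b₁ then 1 else 0)) := by
  classical
  have step1 : (fun v : unitaryGroup (Fin N) ℂ =>
      ((v : Matrix (Fin N) (Fin N) ℂ) * (v : Matrix (Fin N) (Fin N) ℂ)ᵀ) a₁ a₂ *
        (starRingEnd ℂ)
          (((v : Matrix (Fin N) (Fin N) ℂ) * (v : Matrix (Fin N) (Fin N) ℂ)ᵀ) b₁ b₂))
      = fun v => ∑ j : Fin N, ∑ k : Fin N,
          ent v a₁ j * ent v a₂ j * (conj (ent v b₁ k) * conj (ent v b₂ k)) := by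
    funext v
    rw [Matrix.mul_apply, Matrix.mul_apply]
    simp only [Matrix.transpose_apply]
    rw [map_sum, Finset.sum_mul_sum]
    simp only [_root_.map_mul, ent]
  have main : (∫ v : unitaryGroup (Fin N) ℂ,
      ((v : Matrix (Fin N) (Fin N) ℂ) * (v : Matrix (Fin N) (Fin N) ℂ)ᵀ) a₁ a₂ *
        (starRingEnd ℂ)
          (((v : Matrix (Fin N) (Fin N) ℂ) * (v : Matrix (Fin N) (Fin N) ℂ)ᵀ) b₁ b₂) ∂μ)
      = ∑ j : Fin N, mom μ a₁ a₂ b₁ b₂ j j j j := by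
    rw [step1, integral_finset_sum _
      (fun j _ => integrable_finset_sum _ fun k _ => integrable_term μ a₁ a₂ b₁ b₂ j j k k)]
    refine Finset.sum_congr rfl fun j _ => ?_
    rw [integral_finset_sum _ (fun k _ => integrable_term μ a₁ a₂ b₁ b₂ j j k k)]
    exact Finset.sum_eq_single j
      (fun k _ hkj => mom_col_ne μ (Ne.symm hkj) a₁ a₂ b₁ b₂)
      (fun h => absurd (Finset.mem_univ j) h)
  rw [main]
  by_cases h1 : a₁ = b₁ ∧ a₂ = b₂ <;> by_cases h2 : a₁ = b₂ ∧ a₂ = b₁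
  · obtain ⟨e1, e2⟩ := h1
    subst e1; subst e2
    have e : a₁ = a₂ := h2.1
    subst e
    have hS := S_diag μ hN a₁
    rw [show (∑ j : Fin N, mom μ a₁ a₁ a₁ a₁ j j j j) = S μ a₁ a₁ from rfl, hS]
    simp
    try ring
  · obtain ⟨e1, e2⟩ := h1
    subst e1; subst e2
    have hne : a₁ ≠ a₂ := fun h => h2 ⟨h, h.symm⟩
    have hS := S_offdiag μ hne
    rw [show (∑ j : Fin N, mom μ a₁ a₂ a₁ a₂ j j j j) = S μ a₁ a₂ from rfl, hS]
    simp [hne, Ne.symm hne]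
    try ring
  · obtain ⟨e1, e2⟩ := h2
    subst e1; subst e2
    have hne : a₁ ≠ a₂ := fun h => h1 ⟨h, h.symm⟩
    have hS := S_offdiag μ hne
    rw [Finset.sum_congr rfl fun j _ => mom_comm₁ μ a₁ a₂ j,
      show (∑ j : Fin N, mom μ a₁ a₂ a₁ a₂ j j j j) = S μ a₁ a₂ from rfl, hS]
    simp [hne, Ne.symm hne]
    try ring
  · rw [Finset.sum_eq_zero fun j _ => mom_rows_zero μ a₁ a₂ b₁ b₂ j j j j h1 h2]
    rcases not_and_or.mp h1 with h | h <;> rcases not_and_or.mp h2 with h' | h' <;>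
      simp [h, h']
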